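/- Let X = {1,2,3} be the quandle with operation 1∗1=1, 1∗2=1, 1∗3=2; 2∗1=2, 2∗2=2, 2∗3=1; 3∗1=3, 3∗2=3, 3∗3=3 (a non-trivial non-latin quandle of order three). Then the Peirce spectrum of the complex quandle algebra ℂ[X] is all of ℂ: for every λ ∈ ℂ there exists an idempotent u of ℂ[X] such that λ is an eigenvalue of the right multiplication operator S_u : w ↦ w·u on ℂ[X]. -/
import Mathlib


/-- The quandle ring multiplication on `X →₀ k` determined by
`e_x · e_y = e_{op x y}` extended bilinearly. -/
noncomputable def qmul {X : Type*} {k : Type*} [CommRing k] (op : X → X → X)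
    (f g : X →₀ k) : X →₀ k :=
  f.sum fun x a => g.sum fun y b => Finsupp.single (op x y) (a * b)

/-- The non-trivial non-latin quandle of order three (elements `0,1,2`
corresponding to `1,2,3`) with multiplication table rows `(1,1,2), (2,2,1),
(3,3,3)`. -/
def op3 : Fin 3 → Fin 3 → Fin 3 := fun x y =>
  if y = 2 then ![1, 0, 2] x else x

lemma qmul_single_left {X : Type*} {k : Type*} [CommRing k] (op : X → X → X)
    (x : X) (a : k) (g : X →₀ k) :
    qmul op (Finsupp.single x a) g = g.sum fun y b => Finsupp.single (op x y) (a * b) := by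
  unfold qmul
  rw [Finsupp.sum_single_index]
  simp

lemma qmul_single_single {X : Type*} {k : Type*} [CommRing k] (op : X → X → X)
    (x y : X) (a b : k) :
    qmul op (Finsupp.single x a) (Finsupp.single y b) = Finsupp.single (op x y) (a * b) := by
  rw [qmul_single_left, Finsupp.sum_single_index]
  simp

lemma qmul_add_left {X : Type*} {k : Type*} [CommRing k] (op : X → X → X)
    (f f' g : X →₀ k) : qmul op (f + f') g = qmul op f g + qmul op f' g := by
  unfold qmul
  rw [Finsupp.sum_add_index'] <;> intros <;> simp [add_mul, Finsupp.single_add, Finsupp.sum_add]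

lemma qmul_add_right {X : Type*} {k : Type*} [CommRing k] (op : X → X → X)
    (f g g' : X →₀ k) : qmul op f (g + g') = qmul op f g + qmul op f g' := by
  unfold qmul
  rw [← Finsupp.sum_add]
  congr 1
  ext x a
  rw [Finsupp.sum_add_index'] <;> intros <;> simp [mul_add, Finsupp.single_add]

/-- The Peirce spectrum of the complex quandle algebra of the non-trivial
non-latin quandle of order three is all of `ℂ`: every `λ ∈ ℂ` is an
eigenvalue of the right multiplication operator `S_u : w ↦ w·u` for some
idempotent `u` of `ℂ[X]`. -/
theorem peirce_spectrum_nonlatin_order_three_eq_univ :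
    ∀ l : ℂ, ∃ u : Fin 3 →₀ ℂ, (u ≠ 0 ∧ qmul op3 u u = u) ∧
      ∃ w : Fin 3 →₀ ℂ, w ≠ 0 ∧ qmul op3 w u = l • w := by
  intro l
  set a : ℂ := (l + 1) / 4 with ha
  set c : ℂ := (1 - l) / 2 with hc
  refine ⟨Finsupp.single 0 a + Finsupp.single 1 a + Finsupp.single 2 c, ⟨?_, ?_⟩,
    Finsupp.single 0 1 + Finsupp.single 1 (-1), ?_, ?_⟩
  · intro h
    have h0 := DFunLike.congr_fun h (0 : Fin 3)
    have h2 := DFunLike.congr_fun h (2 : Fin 3)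
    simp [Finsupp.single_apply, ha, hc] at h0 h2
    have : l = -1 := by linear_combination h0
    rw [this] at h2
    norm_num at h2
  · simp only [qmul_add_left, qmul_add_right, qmul_single_single]
    have e02 : op3 0 2 = 1 := by decide
    have e12 : op3 1 2 = 0 := by decide
    have e00 : op3 0 0 = 0 := by decide
    have e01 : op3 0 1 = 0 := by decide
    have e10 : op3 1 0 = 1 := by decide
    have e11 : op3 1 1 = 1 := by decide
    have e20 : op3 2 0 = 2 := by decide
    have e21 : op3 2 1 = 2 := by decide
    have e22 : op3 2 2 = 2 := by decide
    rw [e00, e01, e02, e10, e11, e12, e20, e21, e22]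
    ext i
    fin_cases i <;>
      simp [Finsupp.single_apply, ha, hc] <;> ring
  · intro h
    have h0 := DFunLike.congr_fun h (0 : Fin 3)
    simp [Finsupp.single_apply] at h0
  · simp only [qmul_add_left, qmul_add_right, qmul_single_single]
    have e02 : op3 0 2 = 1 := by decide
    have e12 : op3 1 2 = 0 := by decide
    have e00 : op3 0 0 = 0 := by decide
    have e01 : op3 0 1 = 0 := by decide
    have e10 : op3 1 0 = 1 := by decide
    have e11 : op3 1 1 = 1 := by decide
    rw [e00, e01, e02, e10, e11, e12]
    ext i
    fin_cases i <;>
      simp [Finsupp.single_apply, ha, hc] <;> ring
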